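/- arXiv:1208.0859 — 3 statements merged into one kernel-verified Lean document; each statement's English description precedes it below -/
import Mathlib

section
/- Under the standing hypotheses, there exist a positive integer M and a compact set K ⊆ ℝ² such that the square [0,1]² is contained in a bounded connected component of ℝ² \ K and K ⊆ ⋃_{(i,v)∈Σ(M)} (f̂^i(O) + v). -/
noncomputable section

/-- The plane ℝ², with the Euclidean norm. -/
abbrev Plane : Type := EuclideanSpace ℝ (Fin 2)

/-- Integer vectors (elements of ℤ²). -/
abbrev IntVec : Type := Fin 2 → ℤ

/-- The inclusion of ℤ² into ℝ². -/
def ivec (w : IntVec) : Plane := WithLp.toLp 2 (fun i => (w i : ℝ))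

/-- The inclusion of ℤ² into ℝ² as an additive homomorphism. -/
def ivecHom : IntVec →+ Plane where
  toFun := ivec
  map_zero' := by ext i; simp [ivec]
  map_add' a b := by ext i; simp [ivec]

/-- The integer lattice ℤ² as an additive subgroup of ℝ². -/
def Lattice2 : AddSubgroup Plane := ivecHom.range

/-- The torus 𝕋² = ℝ²/ℤ². -/
abbrev Torus2 : Type := Plane ⧸ Lattice2

/-- The universal covering map π : ℝ² → 𝕋². -/
def proj : Plane → Torus2 := QuotientAddGroup.mk

/-- The `j`-th iterate (j ∈ ℤ) of a homeomorphism. -/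
def zIter {X : Type*} [TopologicalSpace X] (g : X ≃ₜ X) (j : ℤ) : X → X := ⇑(g.toEquiv ^ j)

/-- The rotation set of a map of the plane (commuting with integer translations). -/
def rotationSet (g : Plane → Plane) : Set Plane :=
  {v | ∃ (x : ℕ → Plane) (n : ℕ → ℕ), (∀ k, 0 < n k) ∧
    Filter.Tendsto n Filter.atTop Filter.atTop ∧
    Filter.Tendsto (fun k => ((n k : ℝ))⁻¹ • (g^[n k] (x k) - x k))
      Filter.atTop (nhds v)}

/-- Topological transitivity: some forward iterate of any nonempty open set
meets any other nonempty open set. -/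
def IsTransitive {X : Type*} [TopologicalSpace X] (g : X → X) : Prop :=
  ∀ U V : Set X, IsOpen U → IsOpen V → U.Nonempty → V.Nonempty →
    ∃ n : ℕ, 1 ≤ n ∧ (g^[n] '' U ∩ V).Nonempty

/-- `g` is a lift of `f` through the covering map `proj`. -/
def IsLift (f : Torus2 ≃ₜ Torus2) (g : Plane ≃ₜ Plane) : Prop :=
  proj ∘ ⇑g = ⇑f ∘ proj

/-- `g` commutes with the integer translations. -/
def Equivariant (g : Plane → Plane) : Prop :=
  ∀ (x : Plane) (w : IntVec), g (x + ivec w) = g x + ivec w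

/-- An open set of the torus, all of whose loops are null-homotopic in the torus. -/
def InessentialOpen (U : Set Torus2) : Prop :=
  ∀ (x : Torus2) (γ : Path x x), Set.range ⇑γ ⊆ U → γ.Homotopic (Path.refl x)

/-- A set is inessential if it has an inessential open neighborhood. -/
def Inessential (A : Set Torus2) : Prop :=
  ∃ U : Set Torus2, IsOpen U ∧ A ⊆ U ∧ InessentialOpen U

/-- A set is fully essential if its complement is inessential. -/
def FullyEssential (A : Set Torus2) : Prop := Inessential Aᶜ

/-- The sup norm of an integer vector. -/
def supNormZ (w : IntVec) : ℤ := max |w 0| |w 1|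

/-- The box S(v,L) = {w ∈ ℤ² : ‖w−v‖_∞ ≤ L}. -/
def SBox (v : IntVec) (L : ℤ) : Set IntVec := {w | supNormZ (w - v) ≤ L}

/-- Σ(M) = {(i,v) ∈ ℤ×ℤ² : |i| ≤ M, ‖v‖_∞ ≤ M}. -/
def SigmaBox (M : ℤ) : Set (ℤ × IntVec) := {p | |p.1| ≤ M ∧ supNormZ p.2 ≤ M}

/-- The translate A + w of a set A ⊆ ℝ² by an integer vector w. -/
def trSet (A : Set Plane) (w : IntVec) : Set Plane := (· + ivec w) '' A

/-- I(j,v) = {w ∈ ℤ² : f̂ʲ(O+v) ∩ (O+w) ≠ ∅}. -/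
def ISet (g : Plane ≃ₜ Plane) (O : Set Plane) (j : ℤ) (v : IntVec) : Set IntVec :=
  {w | (zIter g j '' trSet O v ∩ trSet O w).Nonempty}

/-- The unit square [0,1]² ⊆ ℝ². -/
def unitSquare : Set Plane := {x | ∀ i, x i ∈ Set.Icc (0:ℝ) 1}

/-- A T_v-translation arc: a curve γ with γ(1) = γ(0) + v whose image meets its
translate by v exactly in γ(1). -/
def IsTranslationArc (v : Plane) (γ : C(unitInterval, Plane)) : Prop :=
  γ 1 = γ 0 + v ∧ Set.range ⇑γ ∩ (· + v) '' Set.range ⇑γ = {γ 1}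

/-- The open ball of radius ε around x in the torus (for the quotient metric). -/
def torusBall (x : Torus2) (ε : ℝ) : Set Torus2 :=
  {y | ∃ a b : Plane, proj a = x ∧ proj b = y ∧ dist a b < ε}

/-!
Let `V` be an inessential open neighbourhood of the complement `E` of the orbit of `π(O)`.
A path in `π⁻¹(V)` from `x` to `x + w` projects to a null-homotopic loop of `V`, and lifting the
homotopy shows `w = 0`: integer translations act freely on the components of `π⁻¹(V)`.
Together with compactness of `E`, this makes every piece `C ∩ π⁻¹(E)`, `C` a component of
`π⁻¹(V)`, bounded. Take a ball `B(0, r)` containing `[0,1]²`; the finitely many components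
meeting `π⁻¹(E) ∩ B̄(0, r)`, joined to `B(0, r)` and cut off by a large ball, form a bounded open set `G` whose frontier misses
`π⁻¹(E)`, because a point of `π⁻¹(V)` in the closure of a union of components lies in it.
So `K = ∂G` is a compact subset of the lifted orbit and is covered by finitely many of the
open sets `f̂ⁱ(O) + v`.
-/

open Metric Set Bornology

section Components

variable {X : Type*} [TopologicalSpace X]

lemma connectedComponentIn_compl_frontier_subset {G : Set X} (hG : IsOpen G) {p : X}
    (hp : p ∈ G) : connectedComponentIn (frontier G)ᶜ p ⊆ G := by
  refine isPreconnected_connectedComponentIn.subset_left_of_subset_union hG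
    isClosed_closure.isOpen_compl (disjoint_compl_right.mono_right
      (compl_subset_compl.mpr subset_closure)) ?_ ⟨p, mem_connectedComponentIn ?_, hp⟩
  · refine (connectedComponentIn_subset _ _).trans fun z hz => ?_
    rw [mem_compl_iff, hG.frontier_eq] at hz
    by_cases hzG : z ∈ G
    exacts [.inl hzG, .inr fun hzc => hz ⟨hzc, hzG⟩]
  · exact fun h => (hG.frontier_eq ▸ h).2 hp

lemma subset_connectedComponentIn_compl_frontier {G A : Set X} (hG : IsOpen G)
    (hA : IsPreconnected A) (hAG : A ⊆ G) {p : X} (hp : p ∈ A) :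
    A ⊆ connectedComponentIn (frontier G)ᶜ p :=
  hA.subset_connectedComponentIn hp fun _ hz h => (hG.frontier_eq ▸ h).2 (hAG hz)

variable [LocallyConnectedSpace X] {S : Set X}

lemma IsCompact.exists_finite_biUnion_connectedComponentIn_eq (hS : IsOpen S) {L : Set X}
    (hL : IsCompact L) (hLS : L ⊆ S) :
    ∃ t ⊆ L, t.Finite ∧
      ⋃ x ∈ t, connectedComponentIn S x = ⋃ x ∈ L, connectedComponentIn S x := by
  obtain ⟨t, htL, ht, hcover⟩ := hL.elim_finite_subcover_image
    (fun x _ => hS.connectedComponentIn) fun x hx =>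
      mem_biUnion hx (mem_connectedComponentIn (hLS hx))
  refine ⟨t, htL, ht, (biUnion_subset_biUnion_left htL).antisymm ?_⟩
  refine iUnion₂_subset fun x hx => ?_
  obtain ⟨d, hd, hxd⟩ := mem_iUnion₂.mp (hcover hx)
  rw [← connectedComponentIn_eq hxd]
  exact subset_biUnion_of_mem hd

lemma inter_closure_biUnion_connectedComponentIn_subset (hS : IsOpen S) (T : Set X) :
    S ∩ closure (⋃ x ∈ T, connectedComponentIn S x) ⊆
      ⋃ x ∈ T, connectedComponentIn S x := by
  rintro z ⟨hzS, hz⟩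
  obtain ⟨y, hyz, hy⟩ := mem_closure_iff.mp hz _ hS.connectedComponentIn
    (mem_connectedComponentIn hzS)
  obtain ⟨x, hx, hyx⟩ := mem_iUnion₂.mp hy
  refine mem_biUnion hx ?_
  rw [connectedComponentIn_eq hyx, ← connectedComponentIn_eq hyz]
  exact mem_connectedComponentIn hzS

end Components

lemma exists_isOpen_isBounded_frontier_disjoint {X : Type*} [PseudoMetricSpace X]
    [LocallyConnectedSpace X] {S F : Set X} (hS : IsOpen S) (hFS : F ⊆ S) (a : X) (r : ℝ)
    (hW : IsBounded ((⋃ x ∈ F ∩ closedBall a r, connectedComponentIn S x) ∩ F)) :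
    ∃ G, IsOpen G ∧ IsBounded G ∧ ball a r ⊆ G ∧ Disjoint (frontier G) F := by
  set W := ⋃ x ∈ F ∩ closedBall a r, connectedComponentIn S x
  obtain ⟨R, hR⟩ := (hW.union isBounded_ball).subset_ball a
  have hGo : IsOpen (ball a R ∩ (ball a r ∪ W)) :=
    isOpen_ball.inter (isOpen_ball.union (isOpen_biUnion fun _ _ => hS.connectedComponentIn))
  refine ⟨_, hGo, isBounded_ball.subset inter_subset_left,
    fun z hz => ⟨hR (.inr hz), .inl hz⟩, disjoint_right.mpr fun z hzF hz => ?_⟩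
  rw [hGo.frontier_eq] at hz
  have hzW : z ∈ W := by
    have hzcl := closure_mono inter_subset_right hz.1
    rw [closure_union] at hzcl
    rcases hzcl with hzr | hzW
    · exact mem_biUnion ⟨hzF, closure_ball_subset_closedBall hzr⟩
        (mem_connectedComponentIn (hFS hzF))
    · exact inter_closure_biUnion_connectedComponentIn_subset hS _ ⟨hFS hzF, hzW⟩
  exact hz.2 ⟨hR (.inl ⟨hzW, hzF⟩), .inr hzW⟩

@[simp]
lemma ivec_apply (w : IntVec) (i : Fin 2) : ivec w i = w i := rfl

@[simp]
lemma ivec_zero : ivec 0 = 0 := map_zero ivecHom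

lemma ivec_add (v w : IntVec) : ivec (v + w) = ivec v + ivec w := map_add ivecHom v w

lemma ivec_sub (v w : IntVec) : ivec (v - w) = ivec v - ivec w := map_sub ivecHom v w

lemma one_le_norm_ivec {w : IntVec} (hw : w ≠ 0) : 1 ≤ ‖ivec w‖ := by
  obtain ⟨i, hi⟩ := Function.ne_iff.mp hw
  calc (1 : ℝ) ≤ |(w i : ℝ)| := by exact_mod_cast Int.one_le_abs hi
    _ = ‖ivec w i‖ := by simp
    _ ≤ ‖ivec w‖ := PiLp.norm_apply_le _ i

@[simp]
lemma ivec_eq_zero_iff {w : IntVec} : ivec w = 0 ↔ w = 0 := by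
  refine ⟨fun h => ?_, fun h => h ▸ ivec_zero⟩
  by_contra hw
  exact absurd (one_le_norm_ivec hw) (by simp [h])

lemma isDiscrete_lattice2 : IsDiscrete (Lattice2 : Set Plane) := by
  refine isDiscrete_iff_forall_mem_exists_isOpen.mpr ?_
  rintro _ ⟨v, rfl⟩
  refine ⟨ball (ivec v) 1, isOpen_ball, Subset.antisymm ?_ ?_⟩
  · rintro _ ⟨hx, w, rfl⟩
    by_contra hne
    have hwv : w - v ≠ 0 := sub_ne_zero.mpr fun h => hne (h ▸ rfl)
    have := one_le_norm_ivec hwv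
    rw [mem_ball, dist_eq_norm] at hx
    change ‖ivec w - ivec v‖ < 1 at hx
    rw [← ivec_sub] at hx
    linarith
  · rintro _ rfl
    exact ⟨mem_ball_self one_pos, v, rfl⟩

lemma isCoveringMap_proj : IsCoveringMap proj :=
  (Lattice2.isAddQuotientCoveringMap_of_comm isDiscrete_lattice2).isCoveringMap

lemma continuous_proj : Continuous proj := isCoveringMap_proj.continuous

lemma isOpenMap_proj : IsOpenMap proj := isCoveringMap_proj.isOpenMap

@[simp]
lemma proj_add_ivec (x : Plane) (w : IntVec) : proj (x + ivec w) = proj x :=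
  QuotientAddGroup.eq_iff_sub_mem.mpr (by rw [add_sub_cancel_left]; exact ⟨w, rfl⟩)

lemma proj_eq_proj_iff {x y : Plane} : proj x = proj y ↔ ∃ w : IntVec, y = x + ivec w := by
  refine ⟨fun h => ?_, fun ⟨w, hw⟩ => hw ▸ (proj_add_ivec x w).symm⟩
  obtain ⟨w, hw⟩ := QuotientAddGroup.eq.mp h
  exact ⟨w, by rw [show ivec w = -x + y from hw]; abel⟩

lemma unitSquare_eq_preimage_Icc :
    unitSquare = PiLp.continuousLinearEquiv 2 ℝ (fun _ : Fin 2 => ℝ) ⁻¹' Icc 0 1 := by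
  ext x
  simp [unitSquare, Pi.le_def, forall_and]

lemma isCompact_unitSquare : IsCompact unitSquare := by
  rw [unitSquare_eq_preimage_Icc]
  exact (PiLp.continuousLinearEquiv 2 ℝ _).toHomeomorph.isCompact_preimage.mpr isCompact_Icc

lemma isPreconnected_unitSquare : IsPreconnected unitSquare := by
  rw [unitSquare_eq_preimage_Icc]
  exact ((convex_Icc 0 1).linear_preimage
    (PiLp.continuousLinearEquiv 2 ℝ _).toLinearMap).isPreconnected

lemma exists_eq_add_ivec_mem_unitSquare (y : Plane) :
    ∃ u ∈ unitSquare, ∃ w : IntVec, y = u + ivec w := by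
  refine ⟨y - ivec fun i => ⌊y i⌋, fun i => ?_, fun i => ⌊y i⌋, by abel⟩
  simp only [PiLp.sub_apply, ivec_apply, Int.self_sub_floor]
  exact ⟨Int.fract_nonneg _, (Int.fract_lt_one _).le⟩

lemma add_ivec_mem_connectedComponentIn {V : Set Torus2} {x y : Plane} (w : IntVec)
    (hy : y ∈ connectedComponentIn (proj ⁻¹' V) x) :
    y + ivec w ∈ connectedComponentIn (proj ⁻¹' V) (x + ivec w) := by
  have hx : x ∈ proj ⁻¹' V := connectedComponentIn_nonempty_iff.mp ⟨y, hy⟩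
  refine (isPreconnected_connectedComponentIn.image _
    (continuous_add_const _).continuousOn).subset_connectedComponentIn
    ⟨x, mem_connectedComponentIn hx, rfl⟩ ?_ ⟨y, hy, rfl⟩
  rintro _ ⟨z, hz, rfl⟩
  simpa using connectedComponentIn_subset _ _ hz

lemma eq_zero_of_add_ivec_mem_connectedComponentIn {V : Set Torus2} (hV : IsOpen V)
    (hVin : InessentialOpen V) {x : Plane} {w : IntVec}
    (hxw : x + ivec w ∈ connectedComponentIn (proj ⁻¹' V) x) : w = 0 := by
  have hx : x ∈ proj ⁻¹' V := connectedComponentIn_nonempty_iff.mp ⟨_, hxw⟩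
  have hC : IsPathConnected (connectedComponentIn (proj ⁻¹' V) x) :=
    (hV.preimage continuous_proj).connectedComponentIn.isConnected_iff_isPathConnected.mp
      (isConnected_connectedComponentIn_iff.mpr hx)
  obtain ⟨p, hp⟩ := hC.joinedIn x (mem_connectedComponentIn hx) _ hxw
  let γ : Path (proj x) (proj x) := (p.map continuous_proj).cast rfl (proj_add_ivec x w).symm
  obtain ⟨H⟩ := hVin _ γ fun _ ⟨t, ht⟩ => ht ▸ connectedComponentIn_subset (proj ⁻¹' V) x (hp t)
  have hend := isCoveringMap_proj.liftPath_apply_one_eq_of_homotopicRel ⟨H⟩ x γ.source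
    (Path.refl _).source
  have hlift : isCoveringMap_proj.liftPath γ.toContinuousMap x γ.source = p.toContinuousMap :=
    ((isCoveringMap_proj.eq_liftPath_iff' ..).mpr ⟨rfl, p.source⟩).symm
  have hrefl : isCoveringMap_proj.liftPath (Path.refl (proj x)).toContinuousMap x
      (Path.refl _).source = ContinuousMap.const _ x :=
    ((isCoveringMap_proj.eq_liftPath_iff' (Γ := .const _ x) ..).mpr ⟨rfl, rfl⟩).symm
  rw [hlift, hrefl] at hend
  simpa using hend

lemma eq_of_add_ivec_mem_connectedComponentIn {V : Set Torus2} (hV : IsOpen V)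
    (hVin : InessentialOpen V) {c d : Plane} {v w : IntVec}
    (hv : d + ivec v ∈ connectedComponentIn (proj ⁻¹' V) c)
    (hw : d + ivec w ∈ connectedComponentIn (proj ⁻¹' V) c) : v = w := by
  rw [connectedComponentIn_eq hv] at hw
  have hwv := add_ivec_mem_connectedComponentIn (-v) hw
  rw [add_assoc, add_assoc, ← ivec_add, ← ivec_add, add_neg_cancel, ivec_zero, add_zero] at hwv
  exact (add_neg_eq_zero.mp (eq_zero_of_add_ivec_mem_connectedComponentIn hV hVin hwv)).symm

lemma isBounded_connectedComponentIn_inter_preimage {V E : Set Torus2} (hV : IsOpen V)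
    (hVin : InessentialOpen V) (hE : IsClosed E) (hEV : E ⊆ V) (c : Plane) :
    IsBounded (connectedComponentIn (proj ⁻¹' V) c ∩ proj ⁻¹' E) := by
  obtain ⟨t, -, ht, hcover⟩ := (isCompact_unitSquare.inter_right
    (hE.preimage continuous_proj)).exists_finite_biUnion_connectedComponentIn_eq
      (hV.preimage continuous_proj) fun x hx => hEV hx.2
  -- A point `u + ivec w` of the piece has `u` in the component of some `d ∈ t`, and then
  -- `d + ivec w` lies in the piece's component; for fixed `d` at most one `w` does so.
  have hsub : connectedComponentIn (proj ⁻¹' V) c ∩ proj ⁻¹' E ⊆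
      ⋃ d ∈ t, ⋃ w ∈ {w | d + ivec w ∈ connectedComponentIn (proj ⁻¹' V) c},
        (· + ivec w) '' unitSquare := by
    rintro y ⟨hyc, hyE⟩
    obtain ⟨u, hu, w, rfl⟩ := exists_eq_add_ivec_mem_unitSquare y
    have huE : proj u ∈ E := by simpa using hyE
    have hu' : u ∈ ⋃ d ∈ t, connectedComponentIn (proj ⁻¹' V) d := by
      rw [hcover]
      exact mem_biUnion (⟨hu, huE⟩ : u ∈ unitSquare ∩ proj ⁻¹' E)
        (mem_connectedComponentIn (hEV huE))
    obtain ⟨d, hd, hud⟩ := mem_iUnion₂.mp hu'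
    have huwd := add_ivec_mem_connectedComponentIn w hud
    refine mem_biUnion hd (mem_biUnion ?_ ⟨u, hu, rfl⟩)
    rw [mem_ofPred_eq, connectedComponentIn_eq hyc, ← connectedComponentIn_eq huwd]
    exact mem_connectedComponentIn (connectedComponentIn_nonempty_iff.mp ⟨_, huwd⟩)
  refine IsBounded.subset ((isBounded_biUnion ht).mpr fun d _ => (isBounded_biUnion ?_).mpr
    fun w _ => (isCompact_unitSquare.image (continuous_add_const _)).isBounded) hsub
  exact Subsingleton.finite fun v hv w hw =>
    eq_of_add_ivec_mem_connectedComponentIn hV hVin hv hw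

lemma exists_isOpen_isBounded_superset_frontier_disjoint_preimage {V E : Set Torus2}
    (hV : IsOpen V) (hVin : InessentialOpen V) (hE : IsClosed E) (hEV : E ⊆ V) {B : Set Plane}
    (hB : IsBounded B) :
    ∃ G, IsOpen G ∧ IsBounded G ∧ B ⊆ G ∧ Disjoint (frontier G) (proj ⁻¹' E) := by
  obtain ⟨r, hr⟩ := hB.subset_ball 0
  obtain ⟨t, -, ht, hcover⟩ := ((isCompact_closedBall (0 : Plane) r).inter_left
    (hE.preimage continuous_proj)).exists_finite_biUnion_connectedComponentIn_eq
      (hV.preimage continuous_proj) fun x hx => hEV hx.1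
  obtain ⟨G, hGo, hGb, hrG, hGE⟩ := exists_isOpen_isBounded_frontier_disjoint
    (hV.preimage continuous_proj) (preimage_mono hEV) 0 r (by
      rw [← hcover, iUnion₂_inter]
      exact (isBounded_biUnion ht).mpr fun c _ =>
        isBounded_connectedComponentIn_inter_preimage hV hVin hE hEV c)
  exact ⟨G, hGo, hGb, hr.trans hrG, hGE⟩

lemma zIter_eq_coe_zpow {X : Type*} [TopologicalSpace X] (g : X ≃ₜ X) (j : ℤ) :
    zIter g j = ⇑(g ^ j) :=
  let toPerm : (X ≃ₜ X) →* Equiv.Perm X :=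
    { toFun := Homeomorph.toEquiv, map_one' := rfl, map_mul' := fun _ _ => rfl }
  congrArg DFunLike.coe (map_zpow toPerm g j).symm

lemma zIter_natCast {X : Type*} [TopologicalSpace X] (g : X ≃ₜ X) (n : ℕ) :
    zIter g n = (⇑g)^[n] := by
  rw [zIter, zpow_natCast, Equiv.Perm.coe_pow]; rfl

lemma zIter_neg_natCast {X : Type*} [TopologicalSpace X] (g : X ≃ₜ X) (n : ℕ) :
    zIter g (-n) = (⇑g.symm)^[n] := by
  rw [zIter, zpow_neg, zpow_natCast, ← inv_pow, Equiv.Perm.coe_pow]; rfl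

lemma isOpenMap_zIter {X : Type*} [TopologicalSpace X] (g : X ≃ₜ X) (j : ℤ) :
    IsOpenMap (zIter g j) :=
  zIter_eq_coe_zpow g j ▸ (g ^ j).isOpenMap

lemma IsLift.proj_zIter {f : Torus2 ≃ₜ Torus2} {fh : Plane ≃ₜ Plane} (hlift : IsLift f fh)
    (j : ℤ) (x : Plane) : proj (zIter fh j x) = zIter f j (proj x) := by
  have h : Function.Semiconj proj fh f := congrFun hlift
  obtain ⟨n, rfl | rfl⟩ := Int.eq_nat_or_neg j
  · rw [zIter_natCast, zIter_natCast]; exact h.iterate_right n x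
  · rw [zIter_neg_natCast, zIter_neg_natCast]
    exact (h.inverses_right fh.apply_symm_apply f.symm_apply_apply).iterate_right n x

lemma IsOpen.trSet {A : Set Plane} (hA : IsOpen A) (w : IntVec) : IsOpen (trSet A w) :=
  isOpenMap_add_right (ivec w) A hA

lemma IsLift.mem_iUnion_trSet_of_proj_mem {f : Torus2 ≃ₜ Torus2} {fh : Plane ≃ₜ Plane}
    (hlift : IsLift f fh) {O : Set Plane} {z : Plane}
    (hz : proj z ∈ ⋃ n : ℤ, zIter f n '' (proj '' O)) :
    z ∈ ⋃ q : ℤ × IntVec, trSet (zIter fh q.1 '' O) q.2 := by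
  obtain ⟨n, _, ⟨y, hy, rfl⟩, hyz⟩ := mem_iUnion.mp hz
  obtain ⟨w, rfl⟩ := proj_eq_proj_iff.mp ((hlift.proj_zIter n y).trans hyz)
  exact mem_iUnion.mpr ⟨(n, w), _, ⟨y, hy, rfl⟩, rfl⟩

lemma Finset.exists_subset_sigmaBox (t : Finset (ℤ × IntVec)) :
    ∃ M : ℕ, 0 < M ∧ ↑t ⊆ SigmaBox M := by
  let size : ℤ × IntVec → ℕ := fun q => q.1.natAbs ⊔ (q.2 0).natAbs ⊔ (q.2 1).natAbs
  refine ⟨t.sup size + 1, by omega, fun q hq => ?_⟩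
  have := Finset.le_sup (f := size) hq
  simp only [size, SigmaBox, supNormZ, mem_ofPred_eq, Int.abs_eq_natAbs] at this ⊢
  omega

theorem exists_surrounding_compact_in_orbit_translates_general
    (f : Torus2 ≃ₜ Torus2) (fh : Plane ≃ₜ Plane)
    (hlift : IsLift f fh)
    (O : Set Plane) (hOopen : IsOpen O)
    (hOfe : FullyEssential (⋃ n : ℤ, zIter f n '' (proj '' O)))
 :
    ∃ M : ℕ, 0 < M ∧ ∃ K : Set Plane, IsCompact K ∧
      (∃ p : Plane, unitSquare ⊆ connectedComponentIn Kᶜ p ∧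
        Bornology.IsBounded (connectedComponentIn Kᶜ p)) ∧
      K ⊆ ⋃ q ∈ SigmaBox (M : ℤ), trSet (zIter fh q.1 '' O) q.2 := by
  obtain ⟨V, hV, horbitV, hVin⟩ := hOfe
  have horbit : IsOpen (⋃ n : ℤ, zIter f n '' (proj '' O)) :=
    isOpen_iUnion fun n => isOpenMap_zIter f n _ (isOpenMap_proj _ hOopen)
  obtain ⟨G, hGo, hGb, hsqG, hGorbit⟩ :=
    exists_isOpen_isBounded_superset_frontier_disjoint_preimage hV hVin horbit.isClosed_compl
      horbitV isCompact_unitSquare.isBounded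
  have hK : IsCompact (frontier G) :=
    isCompact_of_isClosed_isBounded isClosed_frontier
      (hGb.closure.subset frontier_subset_closure)
  have hcover : frontier G ⊆ ⋃ q : ℤ × IntVec, trSet (zIter fh q.1 '' O) q.2 := fun z hz =>
    hlift.mem_iUnion_trSet_of_proj_mem (not_not.mp (disjoint_left.mp hGorbit hz))
  have hopen : ∀ q : ℤ × IntVec, IsOpen (trSet (zIter fh q.1 '' O) q.2) := fun q =>
    (isOpenMap_zIter fh q.1 _ hOopen).trSet q.2
  obtain ⟨t, ht⟩ := hK.elim_finite_subcover _ hopen hcover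
  obtain ⟨M, hM, htM⟩ := t.exists_subset_sigmaBox
  have h0 : (0 : Plane) ∈ unitSquare := by simp [unitSquare]
  exact ⟨M, hM, frontier G, hK,
    ⟨0, subset_connectedComponentIn_compl_frontier hGo isPreconnected_unitSquare hsqG h0,
      hGb.subset (connectedComponentIn_compl_frontier_subset hGo (hsqG h0))⟩,
    ht.trans (iUnion₂_mono' fun q hq => ⟨q, htM hq, subset_rfl⟩)⟩

theorem exists_surrounding_compact_in_orbit_translates
    (f : Torus2 ≃ₜ Torus2) (fh : Plane ≃ₜ Plane)
    (hlift : IsLift f fh) (hequiv : Equivariant ⇑fh)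
    (δ : ℝ) (hδ : 0 < δ) (hδrot : Metric.ball (0 : Plane) δ ⊆ rotationSet ⇑fh)
    (O : Set Plane) (hOopen : IsOpen O) (hOconn : IsConnected O)
    (hOiness : Inessential (closure (proj '' O)))
    (hOfe : FullyEssential (⋃ n : ℤ, zIter f n '' (proj '' O)))
 :
    ∃ M : ℕ, 0 < M ∧ ∃ K : Set Plane, IsCompact K ∧
      (∃ p : Plane, unitSquare ⊆ connectedComponentIn Kᶜ p ∧
        Bornology.IsBounded (connectedComponentIn Kᶜ p)) ∧
      K ⊆ ⋃ q ∈ SigmaBox (M : ℤ), trSet (zIter fh q.1 '' O) q.2 :=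
  exists_surrounding_compact_in_orbit_translates_general f fh hlift O hOopen hOfe
end
end

section
/- Let v ∈ ℝ² be a nonzero vector, and let K₁, K₂ be two path-connected subsets of ℝ² such that (K_i + v) ∩ K_i = ∅ for i ∈ {1,2}. Suppose there are integers i ≥ 0 and j > 0 such that (K₁ − i·v) ∩ K₂ ≠ ∅ and (K₁ + j·v) ∩ K₂ ≠ ∅. Then K₁ ∩ K₂ ≠ ∅; moreover, there exists a T_v-translation arc γ whose image is contained in K₁ ∪ K₂ and which joins a point x ∈ K₁ to the point x + v ∈ K₂. -/
noncomputable section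

/-!
Join `x ∈ K₁` to `y` by a path `α` in `K₁`, and `x - i v` to `y + j v` by a path `β` in `K₂`;
call a parameter pair `(s, t)` a pair at level `ℓ` when `α s - β t = ℓ v`. Levels `i` and `-j`
occur. The planar input is that a path-connected set containing `z` and `z + m v` (`m ≠ 0`)
contains some `w` and `w + v`. Indeed, on a shortest sub-path whose endpoints differ by a nonzero
multiple `k v` no other two points do, so `ω = exp (2πi · / (k v))` turns it into a loop of
winding number one with `ω s ≠ ζ ω t` for `ζ = exp (2πi / k)`, unless `k = ±1`. A logarithm of
`(s, t) ↦ ω s - ζ ω t` on the square then increases by `2πi` along the diagonal, but by `0` along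
the row and the column through a maximum of `‖ω‖`, which is absurd.

Applied to an arc of `α` followed by a translate of an arc of `β`, this produces, between a pair at
level `ℓ` and a pair at any other level, a pair at level `ℓ ± 1`. Choosing pairs closest to each
other in the `ℓ¹` distance then shows that the levels form an interval, hence contain `0` and
`-1`, and that the arcs of `α` and `β` between a closest pair at levels `0` and `-1` form a
translation arc.
-/

open Set Complex Real

instance unitInterval.contractibleSpace : ContractibleSpace unitInterval :=
  (convex_Icc (0 : ℝ) 1).contractibleSpace ⟨0, left_mem_Icc.2 zero_le_one⟩

instance unitInterval.locallyPathConnectedSpace : LocallyPathConnectedSpace unitInterval :=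
  Convex.locallyPathConnectedSpace ℝ (convex_Icc (0 : ℝ) 1)

namespace Complex

theorem sub_eq_sub_of_exp_eq_exp {X : Type*} [TopologicalSpace X] [PreconnectedSpace X]
    {f g : X → ℂ} (hf : Continuous f) (hg : Continuous g) (h : ∀ x, exp (f x) = exp (g x))
    (x y : X) : f x - g x = f y - g y := by
  refine isPreconnected_univ.constant_of_mapsTo
    (isDiscrete_iff_discreteTopology.2 (NormedSpace.discreteTopology_zmultiples (2 * π * I)))
    (hf.sub hg).continuousOn (fun z _ ↦ ?_) (mem_univ x) (mem_univ y)
  obtain ⟨n, hn⟩ := exp_eq_exp_iff_exists_int.1 (h z)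
  exact AddSubgroup.mem_zmultiples_iff.2 ⟨n, by simp [hn]⟩

theorem one_sub_mem_slitPlane {z : ℂ} (hz : ‖z‖ ≤ 1) (h1 : z ≠ 1) : 1 - z ∈ slitPlane := by
  rw [mem_slitPlane_iff]
  by_contra! h
  simp only [sub_re, one_re, sub_im, one_im] at h
  have hre := (abs_le.1 ((abs_re_le_norm z).trans hz)).2
  exact h1 (ext (by simp; linarith [h.1]) (by simp; linarith [h.2]))

theorem exists_continuousMap_exp_eq {X : Type*} [TopologicalSpace X] [SimplyConnectedSpace X]
    [LocallyPathConnectedSpace X] (H : C(X, ℂ)) (hH : ∀ x, H x ≠ 0) :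
    ∃ G : C(X, ℂ), ∀ x, exp (G x) = H x := by
  obtain ⟨x₀⟩ : Nonempty X := inferInstance
  obtain ⟨G, ⟨-, hG⟩, -⟩ :=
    isCoveringMapOn_exp.existsUnique_continuousMap_lifts H (exp_log (hH x₀)) hH
  exact ⟨G, congrFun hG⟩

theorem eq_of_exp_eq_of_mem_slitPlane {g : unitInterval → ℂ} (hg : Continuous g) {a : ℂ}
    (hslit : ∀ s, exp (g s) / a ∈ slitPlane) (hloop : exp (g 1) = exp (g 0)) : g 1 = g 0 := by
  have ha : a ≠ 0 := by rintro rfl; simpa using hslit 0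
  have hlog : Continuous fun s ↦ log (exp (g s) / a) :=
    continuous_iff_continuousAt.2 fun s ↦
      ((continuous_exp.comp hg).div_const a).continuousAt.clog (hslit s)
  have key := sub_eq_sub_of_exp_eq_exp (g := fun s ↦ log (exp (g s) / a) + log a) hg
    (hlog.add continuous_const) (fun s ↦ by
      rw [exp_add, exp_log (slitPlane_ne_zero (hslit s)), exp_log ha, div_mul_cancel₀ _ ha]) 1 0
  rw [hloop] at key
  linear_combination key

/-- A loop in `ℂˣ` with winding number one around the origin meets each of its rotations. -/
theorem exists_exp_eq_mul_exp {L : unitInterval → ℂ} (hL : Continuous L)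
    (hL1 : L 1 = L 0 + 2 * π * I) {ζ : ℂ} (hζ : ‖ζ‖ = 1) : ∃ s t, exp (L s) = ζ * exp (L t) := by
  by_contra! hne
  have hζ1 : ζ ≠ 1 := by rintro rfl; exact hne 0 0 (one_mul _).symm
  have hloop : exp (L 1) = exp (L 0) := by simp [hL1, exp_add]
  obtain ⟨m, -, hm⟩ := isCompact_univ.exists_isMaxOn univ_nonempty
    (continuous_norm.comp (continuous_exp.comp hL)).continuousOn
  have hmax : ∀ s, ‖exp (L s)‖ ≤ ‖exp (L m)‖ := fun s ↦ hm (mem_univ s)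
  obtain ⟨G, hG⟩ := exists_continuousMap_exp_eq
    ⟨fun p : unitInterval × unitInterval ↦ exp (L p.1) - ζ * exp (L p.2), by fun_prop⟩
    fun p ↦ sub_ne_zero.2 (hne _ _)
  simp only [ContinuousMap.coe_mk] at hG
  have hrow : G (1, 1) - G (0, 1) = G (1, m) - G (0, m) :=
    sub_eq_sub_of_exp_eq_exp (f := fun t ↦ G (1, t)) (g := fun t ↦ G (0, t))
      (by fun_prop) (by fun_prop) (fun t ↦ by rw [hG, hG, hloop]) 1 m
  have hcol : G (0, 1) - G (0, 0) = G (m, 1) - G (m, 0) :=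
    sub_eq_sub_of_exp_eq_exp (f := fun s ↦ G (s, 1)) (g := fun s ↦ G (s, 0))
      (by fun_prop) (by fun_prop) (fun s ↦ by rw [hG, hG, hloop]) 0 m
  -- along the diagonal the lift is `L` up to the constant `log (1 - ζ)`
  have hdiag : G (1, 1) - G (0, 0) = 2 * π * I := by
    have := sub_eq_sub_of_exp_eq_exp (f := fun s ↦ G (s, s)) (g := fun s ↦ log (1 - ζ) + L s)
      (by fun_prop) (by fun_prop) (fun s ↦ by
        rw [hG, exp_add, exp_log (sub_ne_zero.2 hζ1.symm)]; ring) 1 0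
    linear_combination this + hL1
  -- through the point `m` where `‖exp ∘ L‖` is maximal, the row and the column of `exp ∘ G`
  -- stay off a ray from `0`, so `G` returns to its initial value along them
  have hζ0 : ζ ≠ 0 := by rintro rfl; simp at hζ
  have hζm : ζ * exp (L m) ≠ 0 := mul_ne_zero hζ0 (exp_ne_zero _)
  have hrow0 : G (1, m) = G (0, m) := by
    refine eq_of_exp_eq_of_mem_slitPlane (g := fun s ↦ G (s, m)) (a := -(ζ * exp (L m)))
      (by fun_prop) (fun s ↦ ?_) (by rw [hG, hG, hloop])
    rw [hG, show (exp (L s) - ζ * exp (L m)) / -(ζ * exp (L m)) =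
      1 - exp (L s) / (ζ * exp (L m)) by field_simp; ring]
    refine one_sub_mem_slitPlane ?_ fun h ↦ hne s m ((div_eq_one_iff_eq hζm).1 h)
    rw [norm_div, norm_mul, hζ, one_mul]
    exact div_le_one_of_le₀ (hmax s) (norm_nonneg _)
  have hcol0 : G (m, 1) = G (m, 0) := by
    refine eq_of_exp_eq_of_mem_slitPlane (g := fun t ↦ G (m, t)) (a := exp (L m))
      (by fun_prop) (fun t ↦ ?_) (by rw [hG, hG, hloop])
    rw [hG, sub_div, div_self (exp_ne_zero _)]
    refine one_sub_mem_slitPlane ?_ fun h ↦ hne m t ((div_eq_one_iff_eq (exp_ne_zero _)).1 h).symm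
    rw [norm_div, norm_mul, hζ, one_mul]
    exact div_le_one_of_le₀ (hmax t) (norm_nonneg _)
  exact two_pi_I_ne_zero (by linear_combination -hdiag + hrow + hcol + hrow0 + hcol0)

end Complex

theorem zsmul_left_injective_of_ne_zero {E : Type*} [AddCommGroup E] [Module ℝ E] {v : E}
    (hv : v ≠ 0) : Function.Injective fun n : ℤ ↦ n • v := fun a b hab ↦
  Int.cast_injective (smul_left_injective ℝ hv (by simpa only [Int.cast_smul_eq_zsmul] using hab))

theorem isClosed_image_zsmul {E : Type*} [NormedAddCommGroup E] [NormedSpace ℝ E] {v : E}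
    (hv : v ≠ 0) (L : Set ℤ) : IsClosed ((· • v) '' L) := by
  have : Topology.IsClosedEmbedding fun n : ℤ ↦ n • v := by
    convert (isClosedEmbedding_smul_left hv).comp Int.isClosedEmbedding_coe_real using 1
    exact funext fun n ↦ (Int.cast_smul_eq_zsmul ℝ n v).symm
  exact this.isClosedMap L (isClosed_discrete L)

theorem eq_and_eq_or_eq_and_eq_of_mem_uIcc {a b c d : ℝ} (hc : c ∈ uIcc a b) (hd : d ∈ uIcc a b)
    (h : |b - a| ≤ |d - c|) : c = a ∧ d = b ∨ c = b ∧ d = a := by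
  rw [mem_uIcc] at hc hd
  rcases abs_cases (b - a) with ⟨h1, h1'⟩ | ⟨h1, h1'⟩ <;>
    rcases abs_cases (d - c) with ⟨h2, h2'⟩ | ⟨h2, h2'⟩ <;> rw [h1, h2] at h <;>
    rcases hc with hc | hc <;> rcases hd with hd | hd
  all_goals first
    | (left; constructor <;> linarith)
    | (right; constructor <;> linarith)

theorem eq_of_mem_uIcc_of_abs_sub_le {a b c : ℝ} (hc : c ∈ uIcc a b) (h : |b - a| ≤ |c - a|) :
    c = b := by
  rcases eq_and_eq_or_eq_and_eq_of_mem_uIcc left_mem_uIcc hc h with ⟨-, h⟩ | ⟨h₁, h₂⟩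
  exacts [h, h₂.trans h₁]

theorem Path.exists_minimal_subpath {E : Type*} [TopologicalSpace E] [Sub E] [ContinuousSub E]
    {a b : E} (γ : Path a b) {D : Set E} (hD : IsClosed D) (hab : b - a ∈ D) :
    ∃ (x y : E) (τ : Path x y), range τ ⊆ range γ ∧ y - x ∈ D ∧
      ∀ s t, τ t - τ s ∈ D → τ s = x ∧ τ t = y ∨ τ s = y ∧ τ t = x := by
  have hP : IsCompact {p : unitInterval × unitInterval | γ p.2 - γ p.1 ∈ D} :=
    (hD.preimage (by fun_prop)).isCompact
  obtain ⟨⟨s₀, t₀⟩, hp₀, hmin⟩ := hP.exists_isMinOn ⟨(0, 1), by simpa using hab⟩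
    (f := fun p ↦ |(p.2 : ℝ) - p.1|) (by fun_prop)
  refine ⟨_, _, γ.subpath s₀ t₀, by simp [range_subpath], hp₀, fun s t hst ↦ ?_⟩
  obtain ⟨σ, hσ, hσs⟩ : γ.subpath s₀ t₀ s ∈ γ '' uIcc s₀ t₀ := by
    rw [← range_subpath]; exact mem_range_self s
  obtain ⟨σ', hσ', hσt⟩ : γ.subpath s₀ t₀ t ∈ γ '' uIcc s₀ t₀ := by
    rw [← range_subpath]; exact mem_range_self t
  rw [← hσs, ← hσt] at hst ⊢
  have hσ : (σ : ℝ) ∈ uIcc (s₀ : ℝ) t₀ := by simpa [mem_uIcc, ← Subtype.coe_le_coe] using hσ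
  have hσ' : (σ' : ℝ) ∈ uIcc (s₀ : ℝ) t₀ := by simpa [mem_uIcc, ← Subtype.coe_le_coe] using hσ'
  rcases eq_and_eq_or_eq_and_eq_of_mem_uIcc hσ hσ' (hmin (show (σ, σ') ∈ _ from hst)) with
    ⟨h1, h2⟩ | ⟨h1, h2⟩
  · exact .inl ⟨congrArg γ (Subtype.ext h1), congrArg γ (Subtype.ext h2)⟩
  · exact .inr ⟨congrArg γ (Subtype.ext h1), congrArg γ (Subtype.ext h2)⟩

theorem Complex.isUnit_of_minimal_path {x y v : ℂ} (τ : Path x y) (hv : v ≠ 0) {k : ℤ} (hk : k ≠ 0)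
    (hxy : y - x = k • v)
    (hτ : ∀ s t, τ t - τ s ∈ (· • v) '' ({0}ᶜ : Set ℤ) → τ s = x ∧ τ t = y ∨ τ s = y ∧ τ t = x) :
    IsUnit k := by
  -- `z ↦ exp (2πi z / (k v))` identifies points that differ by multiples of `k v`, and turns
  -- translation by `v` into multiplication by `exp (2πi / k)`
  obtain ⟨s, t, hst⟩ := exists_exp_eq_mul_exp (L := fun s ↦ 2 * π * I / (k * v) * τ s)
    (by fun_prop) (by rw [τ.source, τ.target, eq_add_of_sub_eq' hxy, zsmul_eq_mul]; field_simp)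
    (norm_exp_ofReal_mul_I (2 * π / k))
  obtain ⟨n, hn⟩ := exp_eq_exp_iff_exists_int.1 (hst.trans (exp_add _ _).symm)
  have key : τ s - τ t = (1 + n * k) • v := by
    have hk' : (k : ℂ) ≠ 0 := Int.cast_ne_zero.2 hk
    push_cast at hn
    field_simp at hn
    rw [zsmul_eq_mul]
    push_cast
    linear_combination hn
  have hinj := zsmul_left_injective_of_ne_zero hv
  by_cases h0 : 1 + n * k = 0
  · exact IsUnit.of_mul_eq_one (-n) (by linear_combination -h0)
  rcases hτ t s ⟨1 + n * k, h0, key.symm⟩ with ⟨ht, hs⟩ | ⟨ht, hs⟩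
  · have : 1 + n * k = k := hinj (show (1 + n * k) • v = k • v by rw [← key, ht, hs, hxy])
    exact IsUnit.of_mul_eq_one (1 - n) (by linear_combination -this)
  · have : 1 + n * k = -k :=
      hinj (show (1 + n * k) • v = (-k) • v by rw [← key, ht, hs, neg_zsmul, ← hxy, neg_sub])
    exact IsUnit.of_mul_eq_one (-1 - n) (by linear_combination -this)

theorem Complex.exists_mem_add_mem {S : Set ℂ} (hS : IsPathConnected S) {v : ℂ} (hv : v ≠ 0)
    {x : ℂ} (hx : x ∈ S) {m : ℤ} (hm : m ≠ 0) (hxm : x + m • v ∈ S) : ∃ y ∈ S, y + v ∈ S := by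
  obtain ⟨γ, hγS⟩ := hS.joinedIn x hx _ hxm
  obtain ⟨y, z, τ, hτγ, ⟨k, hk, hkv : k • v = z - y⟩, hτ⟩ :=
    γ.exists_minimal_subpath (isClosed_image_zsmul hv {0}ᶜ) ⟨m, hm, by simp⟩
  have hτS : range τ ⊆ S := hτγ.trans (range_subset_iff.2 hγS)
  have hy : y ∈ S := hτS ⟨0, τ.source⟩
  have hz : z ∈ S := hτS ⟨1, τ.target⟩
  rcases Int.isUnit_iff.1 (isUnit_of_minimal_path τ hv hk hkv.symm hτ) with rfl | rfl
  · rw [one_zsmul, eq_sub_iff_add_eq'] at hkv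
    exact ⟨y, hy, hkv ▸ hz⟩
  · rw [neg_one_zsmul, eq_sub_iff_add_eq'] at hkv
    exact ⟨z, hz, by rwa [← hkv, neg_add_cancel_right]⟩

theorem IsPathConnected.exists_mem_add_mem {S : Set Plane} (hS : IsPathConnected S) {v : Plane}
    (hv : v ≠ 0) {x : Plane} (hx : x ∈ S) {m : ℤ} (hm : m ≠ 0) (hxm : x + m • v ∈ S) :
    ∃ y ∈ S, y + v ∈ S := by
  let e := Complex.orthonormalBasisOneI.repr.symm
  obtain ⟨_, ⟨y, hy, rfl⟩, z, hz, hzy⟩ := Complex.exists_mem_add_mem (v := e v)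
    (hS.image e.continuous) (by simpa using hv) (mem_image_of_mem e hx) hm
    (by simpa only [map_add, map_zsmul] using mem_image_of_mem e hxm)
  rw [← map_add] at hzy
  exact ⟨y, hy, e.injective hzy ▸ hz⟩

def l1Dist (p q : ℝ × ℝ) : ℝ := |q.1 - p.1| + |q.2 - p.2|

theorem l1Dist_comm (p q : ℝ × ℝ) : l1Dist p q = l1Dist q p := by
  simp only [l1Dist, abs_sub_comm]

theorem l1Dist_le_of_mem_uIcc {p₀ p q : ℝ × ℝ} (hq : q ∈ uIcc p₀ p) :
    l1Dist p₀ q ≤ l1Dist p₀ p := by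
  rw [← uIcc_prod_uIcc] at hq
  exact add_le_add (abs_sub_left_of_mem_uIcc hq.1) (abs_sub_left_of_mem_uIcc hq.2)

theorem eq_of_mem_uIcc_of_l1Dist_le {p₀ p q : ℝ × ℝ} (hq : q ∈ uIcc p₀ p)
    (h : l1Dist p₀ p ≤ l1Dist p₀ q) : q = p := by
  rw [← uIcc_prod_uIcc] at hq
  have h1 := abs_sub_left_of_mem_uIcc hq.1
  have h2 := abs_sub_left_of_mem_uIcc hq.2
  unfold l1Dist at h
  exact Prod.ext (eq_of_mem_uIcc_of_abs_sub_le hq.1 (by linarith))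
    (eq_of_mem_uIcc_of_abs_sub_le hq.2 (by linarith))

theorem IsCompact.exists_forall_mem_uIcc_eq {F : Set (ℝ × ℝ)} (hF : IsCompact F)
    (hne : F.Nonempty) (p₀ : ℝ × ℝ) : ∃ p ∈ F, ∀ q ∈ F, q ∈ uIcc p₀ p → q = p := by
  obtain ⟨p, hp, hmin⟩ := hF.exists_isMinOn hne (f := l1Dist p₀) (by unfold l1Dist; fun_prop)
  exact ⟨p, hp, fun q hq hqp ↦ eq_of_mem_uIcc_of_l1Dist_le hqp (hmin hq)⟩

theorem isTranslationArc_of_forall {v : Plane} {γ : C(unitInterval, Plane)}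
    (h1 : γ 1 = γ 0 + v) (h : ∀ u w, γ w + v = γ u → γ u = γ 1) : IsTranslationArc v γ := by
  refine ⟨h1, Set.ext fun y ↦ ⟨?_, ?_⟩⟩
  · rintro ⟨⟨u, rfl⟩, _, ⟨w, rfl⟩, hwu⟩
    exact h u w hwu
  · rintro rfl
    exact ⟨mem_range_self 1, γ 0, mem_range_self 0, h1.symm⟩

structure FreeCurvePair (v : Plane) (α β : ℝ → Plane) : Prop where
  ne_zero : v ≠ 0
  continuous_left : Continuous α
  continuous_right : Continuous β
  left_free : ∀ s s', α s' ≠ α s + v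
  right_free : ∀ t t', β t' ≠ β t + v

def AtLevel (α β : ℝ → Plane) (v : Plane) (ℓ : ℤ) (p : ℝ × ℝ) : Prop := α p.1 - β p.2 = ℓ • v

def levels (α β : ℝ → Plane) (v : Plane) (Q : Set (ℝ × ℝ)) : Set ℤ :=
  {ℓ | ∃ p ∈ Q, AtLevel α β v ℓ p}

namespace FreeCurvePair

variable {v : Plane} {α β : ℝ → Plane}

theorem of_range_subset {K₁ K₂ : Set Plane} (hv : v ≠ 0) (hd₁ : (· + v) '' K₁ ∩ K₁ = ∅)
    (hd₂ : (· + v) '' K₂ ∩ K₂ = ∅) (hα : Continuous α) (hβ : Continuous β)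
    (hαK : range α ⊆ K₁) (hβK : range β ⊆ K₂) : FreeCurvePair v α β := by
  have hfree {K : Set Plane} (hd : (· + v) '' K ∩ K = ∅) {f : ℝ → Plane} (hf : range f ⊆ K)
      (s s' : ℝ) : f s' ≠ f s + v := fun h ↦ eq_empty_iff_forall_notMem.1 hd (f s + v)
    ⟨mem_image_of_mem _ (hf (mem_range_self s)), h ▸ hf (mem_range_self s')⟩
  exact ⟨hv, hα, hβ, hfree hd₁ hαK, hfree hd₂ hβK⟩

theorem eq_of_atLevel (h : FreeCurvePair v α β) {ℓ ℓ' : ℤ} {p : ℝ × ℝ}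
    (hℓ : AtLevel α β v ℓ p) (hℓ' : AtLevel α β v ℓ' p) : ℓ = ℓ' :=
  zsmul_left_injective_of_ne_zero h.ne_zero (hℓ.symm.trans hℓ')

theorem isClosed_setOf_atLevel (h : FreeCurvePair v α β) (L : Set ℤ) :
    IsClosed {p | ∃ ℓ ∈ L, AtLevel α β v ℓ p} := by
  have : {p | ∃ ℓ ∈ L, AtLevel α β v ℓ p} = (fun p : ℝ × ℝ ↦ α p.1 - β p.2) ⁻¹' ((· • v) '' L) := by
    ext p
    simp [AtLevel, eq_comm]
  rw [this]
  exact (isClosed_image_zsmul h.ne_zero L).preimage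
    ((h.continuous_left.comp continuous_fst).sub (h.continuous_right.comp continuous_snd))

theorem exists_atLevel_adjacent (h : FreeCurvePair v α β) {p₀ p₁ : ℝ × ℝ} {a ℓ : ℤ}
    (h₀ : AtLevel α β v a p₀) (h₁ : AtLevel α β v ℓ p₁) (ha : a ≠ ℓ) :
    ∃ p ∈ uIcc p₀ p₁, AtLevel α β v (ℓ - 1) p ∨ AtLevel α β v (ℓ + 1) p := by
  obtain ⟨s₀, t₀⟩ := p₀
  obtain ⟨s₁, t₁⟩ := p₁
  unfold AtLevel at *
  have hA : IsPathConnected (α '' uIcc s₀ s₁) :=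
    ((convex_uIcc _ _).isPathConnected nonempty_uIcc).image h.continuous_left
  have hB : IsPathConnected ((β · + ℓ • v) '' uIcc t₀ t₁) :=
    ((convex_uIcc _ _).isPathConnected nonempty_uIcc).image
      (h.continuous_right.add continuous_const)
  obtain ⟨y, hy, hyv⟩ := (hA.union hB ⟨α s₁, mem_image_of_mem _ right_mem_uIcc,
      t₁, right_mem_uIcc, by linear_combination (norm := module) -h₁⟩).exists_mem_add_mem
    h.ne_zero (Or.inl (mem_image_of_mem _ left_mem_uIcc)) (sub_ne_zero.2 ha.symm)
    (Or.inr ⟨t₀, left_mem_uIcc, by linear_combination (norm := module) -h₀⟩)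
  rw [← uIcc_prod_uIcc]
  rcases hy with ⟨s, hs, rfl⟩ | ⟨t, ht, rfl⟩ <;> rcases hyv with ⟨s', hs', hs'y⟩ | ⟨t', ht', ht'y⟩
  · exact absurd hs'y (h.left_free s s')
  · exact ⟨(s, t'), ⟨hs, ht'⟩, .inl (by linear_combination (norm := module) -ht'y)⟩
  · exact ⟨(s', t), ⟨hs', ht⟩, .inr (by linear_combination (norm := module) hs'y)⟩
  · exact absurd (add_right_cancel (ht'y.trans (add_right_comm _ _ _))) (h.right_free t t')

theorem ordConnected_levels (h : FreeCurvePair v α β) (a b : ℝ × ℝ) :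
    (levels α β v (Icc a b)).OrdConnected := by
  refine ⟨fun ℓ₁ hℓ₁ ℓ₂ hℓ₂ c hc ↦ ?_⟩
  by_contra hcL
  obtain ⟨p₁, hp₁Q, hp₁⟩ := hℓ₁
  obtain ⟨b', ⟨hb'L, hcb'⟩, hb'min⟩ := Int.exists_least_of_bdd
    (P := fun ℓ ↦ ℓ ∈ levels α β v (Icc a b) ∧ c ≤ ℓ) ⟨c, fun _ h ↦ h.2⟩ ⟨ℓ₂, hℓ₂, hc.2⟩
  have hcb' : c < b' := lt_of_le_of_ne hcb' (by rintro rfl; exact hcL hb'L)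
  obtain ⟨p', ⟨hp'Q, ℓ', hℓ'b', hp'⟩, hclosest⟩ :=
    (isCompact_Icc.inter_right (h.isClosed_setOf_atLevel (Ici b'))).exists_forall_mem_uIcc_eq
      (by obtain ⟨p, hpQ, hp⟩ := hb'L; exact ⟨p, hpQ, b', self_mem_Ici, hp⟩) p₁
  have hℓ' : b' ≤ ℓ' := hℓ'b'
  have hℓ₁c : ℓ₁ ≤ c := hc.1
  -- the neighbour of `p'` towards `p₁` is neither at a level `≥ b'` (it would be closer to `p₁`)
  -- nor at level `b' - 1 ≥ c` (by the choice of `b'`)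
  obtain ⟨p, hp, hplev⟩ := h.exists_atLevel_adjacent hp₁ hp' (by omega)
  have hpQ : p ∈ Icc a b := uIcc_subset_Icc hp₁Q hp'Q hp
  rcases hplev with hlev | hlev
  · by_cases hb : b' ≤ ℓ' - 1
    · obtain rfl := hclosest p ⟨hpQ, _, hb, hlev⟩ hp
      exact absurd (h.eq_of_atLevel hlev hp') (by omega)
    · exact absurd (hb'min _ ⟨⟨p, hpQ, hlev⟩, by omega⟩) (by omega)
  · obtain rfl := hclosest p ⟨hpQ, _, (by simp only [mem_Ici]; omega), hlev⟩ hp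
    exact absurd (h.eq_of_atLevel hlev hp') (by omega)

theorem not_atLevel_of_mem_uIcc (h : FreeCurvePair v α β) {p q : ℝ × ℝ}
    (hp : AtLevel α β v 0 p) (hq : AtLevel α β v (-1) q)
    (hp_only : ∀ r ∈ uIcc q p, AtLevel α β v 0 r → r = p) {r : ℝ × ℝ} (hr : r ∈ uIcc q p)
    {k : ℤ} (hk : 1 ≤ k) : ¬ AtLevel α β v k r := by
  intro hrk
  obtain ⟨r', ⟨hr'W, k', hk', hr'⟩, hclosest⟩ :=
    ((show IsCompact (uIcc q p) from isCompact_Icc).inter_right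
      (h.isClosed_setOf_atLevel (Ici 1))).exists_forall_mem_uIcc_eq ⟨r, hr, k, hk, hrk⟩ q
  have hk'1 : 1 ≤ k' := hk'
  -- the neighbour of `r'` towards `q` is at a positive level, hence equal to `r'`, or at level `0`,
  -- hence equal to `p`, which squeezes `r'` to `p`
  obtain ⟨r, hr, hrlev⟩ := h.exists_atLevel_adjacent hq hr' (by omega)
  have hrW : r ∈ uIcc q p := uIcc_subset_uIcc_left hr'W hr
  rcases hrlev with hlev | hlev
  · by_cases hk1 : 1 ≤ k' - 1
    · obtain rfl := hclosest r ⟨hrW, _, hk1, hlev⟩ hr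
      exact absurd (h.eq_of_atLevel hlev hr') (by omega)
    · rw [show k' - 1 = 0 by omega] at hlev
      have hrp := hp_only r hrW hlev
      have hr'p : r' = p := eq_of_mem_uIcc_of_l1Dist_le hr'W (hrp ▸ l1Dist_le_of_mem_uIcc hr)
      exact absurd (h.eq_of_atLevel hp (hr'p ▸ hr')) (by omega)
  · obtain rfl := hclosest r ⟨hrW, _, (by simp only [mem_Ici]; omega), hlev⟩ hr
    exact absurd (h.eq_of_atLevel hlev hr') (by omega)

theorem add_eq_of_mem_union_image (h : FreeCurvePair v α β) {p q : ℝ × ℝ}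
    (hq_only : ∀ r ∈ uIcc q p, AtLevel α β v (-1) r → r = q)
    (hpos : ∀ r ∈ uIcc q p, ¬ AtLevel α β v 1 r) {y : Plane}
    (hy : y ∈ α '' uIcc q.1 p.1 ∪ β '' uIcc q.2 p.2)
    (hyv : y + v ∈ α '' uIcc q.1 p.1 ∪ β '' uIcc q.2 p.2) : y + v = β q.2 := by
  rcases hy with ⟨s, hs, rfl⟩ | ⟨t, ht, rfl⟩ <;> rcases hyv with ⟨s', hs', hs'y⟩ | ⟨t', ht', ht'y⟩
  · exact absurd hs'y (h.left_free s s')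
  · have hst' : (s, t') ∈ uIcc q p := by rw [← uIcc_prod_uIcc]; exact ⟨hs, ht'⟩
    have := hq_only _ hst' (by unfold AtLevel; linear_combination (norm := module) -ht'y)
    rw [← ht'y, ← this]
  · have hs't : (s', t) ∈ uIcc q p := by rw [← uIcc_prod_uIcc]; exact ⟨hs', ht⟩
    exact absurd (by unfold AtLevel; linear_combination (norm := module) hs'y) (hpos _ hs't)
  · exact absurd ht'y (h.right_free t t')

theorem exists_isTranslationArc (h : FreeCurvePair v α β) (a b : ℝ × ℝ)
    (h0 : 0 ∈ levels α β v (Icc a b)) (h1 : -1 ∈ levels α β v (Icc a b)) :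
    ∃ γ : C(unitInterval, Plane), IsTranslationArc v γ ∧ range γ ⊆ range α ∪ range β ∧
      γ 0 ∈ range α ∧ γ 1 ∈ range β := by
  have hF (ℓ : ℤ) : IsCompact (Icc a b ∩ {p | AtLevel α β v ℓ p}) :=
    isCompact_Icc.inter_right (by simpa using h.isClosed_setOf_atLevel {ℓ})
  obtain ⟨⟨p, q⟩, ⟨⟨hpQ, hp⟩, ⟨hqQ, hq⟩⟩, hmin⟩ := ((hF 0).prod (hF (-1))).exists_isMinOn
    (Nonempty.prod (s := Icc a b ∩ {p | AtLevel α β v 0 p})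
      (t := Icc a b ∩ {p | AtLevel α β v (-1) p}) h0 h1) (f := fun pq ↦ l1Dist pq.2 pq.1)
    (by unfold l1Dist; fun_prop)
  have hWQ : uIcc q p ⊆ Icc a b := uIcc_subset_Icc hqQ hpQ
  have hp_only : ∀ r ∈ uIcc q p, AtLevel α β v 0 r → r = p := fun r hr hr0 ↦
    eq_of_mem_uIcc_of_l1Dist_le hr (hmin (show (r, q) ∈ _ from ⟨⟨hWQ hr, hr0⟩, hqQ, hq⟩))
  have hq_only : ∀ r ∈ uIcc q p, AtLevel α β v (-1) r → r = q := fun r hr hr1 ↦ by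
    refine eq_of_mem_uIcc_of_l1Dist_le (uIcc_comm q p ▸ hr) ?_
    rw [l1Dist_comm, l1Dist_comm p]
    exact hmin (show (p, r) ∈ _ from ⟨⟨hpQ, hp⟩, hWQ hr, hr1⟩)
  have hjoin : α p.1 = β p.2 := by simpa [AtLevel, sub_eq_zero] using hp
  have hends : β q.2 = α q.1 + v := by
    have hq : α q.1 - β q.2 = (-1 : ℤ) • v := hq
    linear_combination (norm := module) -hq
  have hS : IsPathConnected (α '' uIcc q.1 p.1 ∪ β '' uIcc q.2 p.2) :=
    (((convex_uIcc _ _).isPathConnected nonempty_uIcc).image h.continuous_left).union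
      (((convex_uIcc _ _).isPathConnected nonempty_uIcc).image h.continuous_right)
      ⟨α p.1, mem_image_of_mem _ right_mem_uIcc, p.2, right_mem_uIcc, hjoin.symm⟩
  have hJ := hS.joinedIn _ (Or.inl (mem_image_of_mem _ left_mem_uIcc)) _
    (Or.inr (mem_image_of_mem _ left_mem_uIcc))
  refine ⟨hJ.somePath, isTranslationArc_of_forall (by simp [hends]) fun u w hwu ↦ ?_, ?_,
    ⟨q.1, by simp⟩, ⟨q.2, by simp⟩⟩
  · have hwu : hJ.somePath w + v = hJ.somePath u := hwu
    exact hwu.symm.trans <| (h.add_eq_of_mem_union_image hq_only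
      (fun r hr ↦ h.not_atLevel_of_mem_uIcc hp hq hp_only hr le_rfl)
      (hJ.somePath_mem w) (hwu ▸ hJ.somePath_mem u)).trans hJ.somePath.target.symm
  · rintro _ ⟨u, rfl⟩
    rcases hJ.somePath_mem u with ⟨s, -, hs⟩ | ⟨t, -, ht⟩
    exacts [.inl ⟨s, hs⟩, .inr ⟨t, ht⟩]

end FreeCurvePair

theorem in_between_lemma
    (v : Plane) (hv : v ≠ 0) (K₁ K₂ : Set Plane)
    (h1 : IsPathConnected K₁) (h2 : IsPathConnected K₂)
    (hd1 : (· + v) '' K₁ ∩ K₁ = ∅) (hd2 : (· + v) '' K₂ ∩ K₂ = ∅)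
    (i j : ℤ) (hi : 0 ≤ i) (hj : 0 < j)
    (hneg : ((· - (i : ℝ) • v) '' K₁ ∩ K₂).Nonempty)
    (hpos : ((· + (j : ℝ) • v) '' K₁ ∩ K₂).Nonempty) :
    (K₁ ∩ K₂).Nonempty ∧
      ∃ γ : C(unitInterval, Plane), IsTranslationArc v γ ∧
        Set.range ⇑γ ⊆ K₁ ∪ K₂ ∧ γ 0 ∈ K₁ ∧ γ 1 ∈ K₂ := by
  obtain ⟨_, ⟨x, hx, rfl⟩, hx'⟩ := hneg
  obtain ⟨_, ⟨y, hy, rfl⟩, hy'⟩ := hpos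
  obtain ⟨α, hαK⟩ := h1.joinedIn x hx y hy
  obtain ⟨β, hβK⟩ := h2.joinedIn _ hx' _ hy'
  replace hαK : range α.extend ⊆ K₁ := α.extend_range ▸ range_subset_iff.2 hαK
  replace hβK : range β.extend ⊆ K₂ := β.extend_range ▸ range_subset_iff.2 hβK
  have hαβ := FreeCurvePair.of_range_subset hv hd1 hd2 α.continuous_extend β.continuous_extend
    hαK hβK
  have hi' : i ∈ levels α.extend β.extend v (Icc 0 1) :=
    ⟨0, left_mem_Icc.2 zero_le_one, by simp [AtLevel, Int.cast_smul_eq_zsmul]⟩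
  have hj' : -j ∈ levels α.extend β.extend v (Icc 0 1) :=
    ⟨1, right_mem_Icc.2 zero_le_one, by simp [AtLevel, Int.cast_smul_eq_zsmul]⟩
  have hlevels := hαβ.ordConnected_levels 0 1
  have hlev0 := hlevels.out hj' hi' (show 0 ∈ Icc (-j) i from ⟨by omega, hi⟩)
  have hlev1 := hlevels.out hj' hi' (show -1 ∈ Icc (-j) i from ⟨by omega, by omega⟩)
  obtain ⟨γ, hγ, hrange, hγ0, hγ1⟩ := hαβ.exists_isTranslationArc 0 1 hlev0 hlev1
  obtain ⟨p, -, hp⟩ := hlev0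
  have hmeet : α.extend p.1 = β.extend p.2 := by simpa [AtLevel, sub_eq_zero] using hp
  exact ⟨⟨_, hαK (mem_range_self _), hmeet ▸ hβK (mem_range_self _)⟩,
    γ, hγ, hrange.trans (union_subset_union hαK hβK), hαK hγ0, hβK hγ1⟩

end
end

section
/- Let ĝ : ℝ² → ℝ² be a homeomorphism satisfying ĝ(x + w) = ĝ(x) + w for all x ∈ ℝ² and w ∈ ℤ² (so ĝ is a lift of a homeomorphism of 𝕋² homotopic to the identity). If there exists a bounded set Û ⊆ ℝ² with ĝ(Û) = Û and π(Û) dense in 𝕋², then the rotation set ρ(ĝ) equals {(0,0)}. -/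
noncomputable section

/-!
Invariance of the bounded set `U` bounds the displacement `ĝⁿ u - u` on `U` by `diam U`. By
equivariance the displacement only depends on the point of the torus, so the same bound holds on
`π⁻¹(π(U))`, which is dense, hence everywhere by continuity. Uniformly bounded displacements
divided by `n → ∞` tend to `0`.
-/

open Filter Topology Set

theorem Equivariant.iterate {f : Plane → Plane} (hf : Equivariant f) (n : ℕ) :
    Equivariant f^[n] := by
  intro x w
  induction n generalizing x with
  | zero => rfl
  | succ m ih => rw [Function.iterate_succ_apply, hf, Function.iterate_succ_apply, ih]

theorem Equivariant.sub_eq_of_proj_eq {f : Plane → Plane} (hf : Equivariant f) {x y : Plane}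
    (h : proj x = proj y) : f y - y = f x - x := by
  obtain ⟨w, hw⟩ : -x + y ∈ Lattice2 := QuotientAddGroup.eq.1 h
  have hy : y = x + ivec w := by
    rw [show ivec w = -x + y from hw]
    abel
  rw [hy, hf]
  abel

theorem Equivariant.norm_sub_le_of_dense {f : Plane → Plane} (hf : Equivariant f)
    (hcont : Continuous f) {U : Set Plane} (hU : Dense (proj '' U)) {C : ℝ}
    (hC : ∀ u ∈ U, ‖f u - u‖ ≤ C) (x : Plane) : ‖f x - x‖ ≤ C := by
  have hclosed : IsClosed {x | ‖f x - x‖ ≤ C} :=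
    isClosed_le (hcont.sub continuous_id).norm continuous_const
  have hsat : proj ⁻¹' (proj '' U) ⊆ {x | ‖f x - x‖ ≤ C} := by
    rintro x ⟨u, hu, hux⟩
    show ‖f x - x‖ ≤ C
    rw [hf.sub_eq_of_proj_eq hux]
    exact hC u hu
  have hdense : Dense (proj ⁻¹' (proj '' U)) := hU.preimage QuotientAddGroup.isOpenMap_coe
  exact hclosed.closure_subset_iff.2 hsat (hdense.closure_eq ▸ mem_univ x)

theorem norm_iterate_sub_le_diam {E : Type*} [SeminormedAddCommGroup E] {f : E → E}
    {U : Set E} (hU : Bornology.IsBounded U) (hf : MapsTo f U U) (n : ℕ) {u : E} (hu : u ∈ U) :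
    ‖f^[n] u - u‖ ≤ Metric.diam U := by
  rw [← dist_eq_norm]
  exact Metric.dist_le_diam_of_mem hU (hf.iterate n hu) hu

theorem tendsto_inv_natCast_smul_of_norm_le {E : Type*} [SeminormedAddCommGroup E]
    [NormedSpace ℝ E] {n : ℕ → ℕ} (hn : Tendsto n atTop atTop) {y : ℕ → E} {C : ℝ}
    (hy : ∀ k, ‖y k‖ ≤ C) : Tendsto (fun k => (n k : ℝ)⁻¹ • y k) atTop (𝓝 0) :=
  (tendsto_inv_atTop_zero.comp (tendsto_natCast_atTop_atTop.comp hn)).zero_smul_isBoundedUnder_le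
    (isBoundedUnder_of ⟨C, hy⟩)

theorem rotationSet_eq_singleton_zero_of_norm_iterate_sub_le {f : Plane → Plane} {C : ℝ}
    (hC : ∀ n x, ‖f^[n] x - x‖ ≤ C) : rotationSet f = {0} := by
  ext v
  constructor
  · rintro ⟨x, n, -, hn, hv⟩
    exact tendsto_nhds_unique hv (tendsto_inv_natCast_smul_of_norm_le hn fun k => hC _ _)
  · rintro rfl
    have hn : Tendsto (· + 1) atTop atTop := tendsto_add_atTop_nat 1
    exact ⟨fun _ => 0, (· + 1), Nat.succ_pos, hn,
      tendsto_inv_natCast_smul_of_norm_le hn fun k => hC _ _⟩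

theorem rotationSet_trivial_of_bounded_invariant_dense
    (g : Plane ≃ₜ Plane) (hequiv : Equivariant ⇑g)
    (U : Set Plane) (hUb : Bornology.IsBounded U)
    (hUinv : ⇑g '' U = U) (hdense : Dense (proj '' U)) :
    rotationSet ⇑g = {0} := by
  have hmaps : MapsTo g U U := (mapsTo_image g U).mono_right hUinv.subset
  refine rotationSet_eq_singleton_zero_of_norm_iterate_sub_le (C := Metric.diam U) fun n => ?_
  exact (hequiv.iterate n).norm_sub_le_of_dense (g.continuous.iterate n) hdense
    fun u hu => norm_iterate_sub_le_diam hUb hmaps n hu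

end
end
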